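/- For the complex polynomial f: ℂ² → ℂ, f(x,y) = x(x²+1)², the value 0 belongs to the set of asymptotic critical values K_∞(f). Consequently, for the polynomial x(x²+1)², the set K_∞ of the real polynomial differs from ℝ ∩ K_∞ of its complexification. -/

import Mathlib

/-!
Over `ℂ` the polynomial `x(x²+1)²` has the critical point `x = i` with critical value `0`;
since `f` does not depend on `y`, the points `(i, ν)` escape to infinity with `df = 0`, so `0`
is an asymptotic critical value. Over `ℝ` the derivative `(x²+1)(5x²+1)` is at least `1`, so
`‖u‖ · ‖df(u)‖ → ∞` along every escaping sequence and the real `K_∞` is empty.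
-/

open Filter Topology

/-- `y ∈ K_∞(f)`. -/
def IsAsymptoticCriticalValue (𝕜 : Type*) [NontriviallyNormedField 𝕜] {E : Type*}
    [NormedAddCommGroup E] [NormedSpace 𝕜 E] (f : E → 𝕜) (y : 𝕜) : Prop :=
  ∃ u : ℕ → E, Tendsto (fun ν => ‖u ν‖) atTop atTop ∧ Tendsto (fun ν => f (u ν)) atTop (𝓝 y) ∧
    Tendsto (fun ν => ‖u ν‖ * ‖fderiv 𝕜 f (u ν)‖) atTop (𝓝 0)

section AsymptoticCriticalValue

variable {𝕜 : Type*} [NontriviallyNormedField 𝕜] {E : Type*} [NormedAddCommGroup E]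
  [NormedSpace 𝕜 E]

theorem not_isAsymptoticCriticalValue_of_forall_le_norm_fderiv {f : E → 𝕜} {δ : ℝ}
    (hδ : 0 < δ) (hf : ∀ x, δ ≤ ‖fderiv 𝕜 f x‖) (y : 𝕜) :
    ¬ IsAsymptoticCriticalValue 𝕜 f y := by
  rintro ⟨u, hu, -, hdf⟩
  have hgrowth : Tendsto (fun ν => ‖u ν‖ * ‖fderiv 𝕜 f (u ν)‖) atTop atTop :=
    tendsto_atTop_mono (fun ν => mul_le_mul_of_nonneg_left (hf (u ν)) (norm_nonneg _))
      (hu.atTop_mul_const hδ)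
  exact not_tendsto_nhds_of_tendsto_atTop hgrowth 0 hdf

theorem norm_fderiv_comp_fst {F : Type*} [NormedAddCommGroup F] [NormedSpace 𝕜 F]
    {g : 𝕜 → 𝕜} {g' : 𝕜} {p : 𝕜 × F} (hg : HasDerivAt g g' p.1) :
    ‖fderiv 𝕜 (fun q : 𝕜 × F => g q.1) p‖ = ‖g'‖ := by
  have hdf : HasFDerivAt (fun q : 𝕜 × F => g q.1) (g' • ContinuousLinearMap.fst 𝕜 𝕜 F) p :=
    hg.comp_hasFDerivAt p hasFDerivAt_fst
  rw [hdf.fderiv, norm_smul, ContinuousLinearMap.norm_fst, mul_one]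

/-- Witnessed by the points `(c, ν • v)` for a fixed `v ≠ 0`. -/
theorem isAsymptoticCriticalValue_comp_fst {K : Type*} [RCLike K] {F : Type*}
    [NormedAddCommGroup F] [NormedSpace K F] [Nontrivial F] {g : K → K} {c : K}
    (hc : HasDerivAt g 0 c) :
    IsAsymptoticCriticalValue K (fun q : K × F => g q.1) (g c) := by
  obtain ⟨v, hv⟩ := exists_ne (0 : F)
  refine ⟨fun ν => (c, (ν : K) • v), ?_, tendsto_const_nhds, ?_⟩
  · refine tendsto_atTop_mono (fun ν => ?_)
      (tendsto_natCast_atTop_atTop.atTop_mul_const (norm_pos_iff.mpr hv))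
    calc (ν : ℝ) * ‖v‖ = ‖(ν : K) • v‖ := by rw [norm_smul, RCLike.norm_natCast]
      _ ≤ ‖(c, (ν : K) • v)‖ := norm_snd_le (c, (ν : K) • v)
  · have hcrit (ν : ℕ) : ‖fderiv K (fun q : K × F => g q.1) (c, (ν : K) • v)‖ = 0 := by
      rw [norm_fderiv_comp_fst hc, norm_zero]
    simp only [hcrit, mul_zero, tendsto_const_nhds]

end AsymptoticCriticalValue

theorem hasDerivAt_mul_sq_add_one_sq {𝕜 : Type*} [NontriviallyNormedField 𝕜] (x : 𝕜) :
    HasDerivAt (fun x : 𝕜 => x * (x ^ 2 + 1) ^ 2) ((x ^ 2 + 1) * (5 * x ^ 2 + 1)) x := by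
  refine ((hasDerivAt_id' x).fun_mul
    ((((hasDerivAt_id' x).fun_pow 2).add_const 1).fun_pow 2)).congr_deriv ?_
  push_cast
  ring

theorem one_le_norm_fderiv_mul_sq_add_one_sq (p : ℝ × ℝ) :
    1 ≤ ‖fderiv ℝ (fun p : ℝ × ℝ => p.1 * (p.1 ^ 2 + 1) ^ 2) p‖ := by
  rw [norm_fderiv_comp_fst (hasDerivAt_mul_sq_add_one_sq p.1), Real.norm_eq_abs,
    abs_of_nonneg (by positivity)]
  nlinarith [sq_nonneg p.1, sq_nonneg (p.1 ^ 2)]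

theorem isAsymptoticCriticalValue_mul_sq_add_one_sq_zero :
    IsAsymptoticCriticalValue ℂ (fun p : ℂ × ℂ => p.1 * (p.1 ^ 2 + 1) ^ 2) 0 := by
  have hI : HasDerivAt (fun x : ℂ => x * (x ^ 2 + 1) ^ 2) 0 Complex.I := by
    simpa using hasDerivAt_mul_sq_add_one_sq Complex.I
  simpa using isAsymptoticCriticalValue_comp_fst (F := ℂ) hI

/-- For the complex polynomial `f(x,y) = x(x²+1)²`, the value `0` is an asymptotic
critical value of `f` over `ℂ`; consequently the set `K_∞` of the real polynomial
`x(x²+1)²` differs from `ℝ ∩ K_∞` of its complexification. -/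
theorem Kinfty_complex_example :
    (∃ u : ℕ → ℂ × ℂ,
      Tendsto (fun ν => ‖u ν‖) atTop atTop ∧
      Tendsto (fun ν => (u ν).1 * ((u ν).1 ^ 2 + 1) ^ 2) atTop (nhds 0) ∧
      Tendsto (fun ν => ‖u ν‖ *
        ‖fderiv ℂ (fun p : ℂ × ℂ => p.1 * (p.1 ^ 2 + 1) ^ 2) (u ν)‖) atTop (nhds 0)) ∧
    {y : ℝ | ∃ u : ℕ → ℝ × ℝ,
      Tendsto (fun ν => ‖u ν‖) atTop atTop ∧
      Tendsto (fun ν => (u ν).1 * ((u ν).1 ^ 2 + 1) ^ 2) atTop (nhds y) ∧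
      Tendsto (fun ν => ‖u ν‖ *
        ‖fderiv ℝ (fun p : ℝ × ℝ => p.1 * (p.1 ^ 2 + 1) ^ 2) (u ν)‖) atTop (nhds 0)} ≠
    {y : ℝ | ∃ u : ℕ → ℂ × ℂ,
      Tendsto (fun ν => ‖u ν‖) atTop atTop ∧
      Tendsto (fun ν => (u ν).1 * ((u ν).1 ^ 2 + 1) ^ 2) atTop (nhds (y : ℂ)) ∧
      Tendsto (fun ν => ‖u ν‖ *
        ‖fderiv ℂ (fun p : ℂ × ℂ => p.1 * (p.1 ^ 2 + 1) ^ 2) (u ν)‖) atTop (nhds 0)} := by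
  refine ⟨isAsymptoticCriticalValue_mul_sq_add_one_sq_zero, fun hset => ?_⟩
  have hzero : IsAsymptoticCriticalValue ℂ (fun p : ℂ × ℂ => p.1 * (p.1 ^ 2 + 1) ^ 2)
      ((0 : ℝ) : ℂ) := by
    simpa using isAsymptoticCriticalValue_mul_sq_add_one_sq_zero
  exact not_isAsymptoticCriticalValue_of_forall_le_norm_fderiv one_pos
    one_le_norm_fderiv_mul_sq_add_one_sq 0 ((Set.ext_iff.mp hset 0).mpr hzero)
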